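/- For every finite prediction set Î of intervals and every finite sequence I = r_1, …, r_n of distinct intervals, the algorithm TrustGreedy satisfies TrustGreedy(Î, I) ≥ Opt(I) − Opt((I \ Î) ∪ (Î \ I)), where I is also regarded as the set {r_1, …, r_n}. Equivalently, TrustGreedy is (1 − γ)-competitive for online interval scheduling, where γ = Opt((I \ Î) ∪ (Î \ I))/Opt(I), matching the general upper bound for deterministic algorithms. -/

import Mathlib

open scoped Classical

/-- An interval is a pair `(a, b)` of integers; it is *valid* when `a < b`. -/
abbrev Iv := ℤ × ℤ

/-- Two intervals `(a,b)` and `(c,d)` overlap if `max a c < min b d`. -/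
def Overlap (i j : Iv) : Prop := max i.1 j.1 < min i.2 j.2

instance : ∀ i j : Iv, Decidable (Overlap i j) := fun _ _ => by
  unfold Overlap; infer_instance

/-- A finite set of intervals is pairwise non-overlapping. -/
def NonOverlapping (T : Finset Iv) : Prop :=
  ∀ i ∈ T, ∀ j ∈ T, i ≠ j → ¬ Overlap i j

instance : DecidablePred NonOverlapping := fun _ => by
  unfold NonOverlapping; infer_instance

/-- `Opt S` is the maximum cardinality of a pairwise non-overlapping subset of `S`. -/
def Opt (S : Finset Iv) : ℕ :=
  (S.powerset.filter fun T => NonOverlapping T).sup Finset.card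

/-- The interval of `S` with minimum right endpoint, ties broken by the fixed rule of
taking the minimum left endpoint (obtained as the lexicographic minimum of
`(right endpoint, left endpoint)`). -/
def efPick (S : Finset Iv) (h : S.Nonempty) : Iv :=
  let m := (S.image fun i => toLex (i.2, i.1)).min' (h.image _)
  ((ofLex m).2, (ofLex m).1)

/-- Fuelled version of the earliest-finish greedy construction: repeatedly add an
interval with minimum right endpoint among the intervals overlapping no
already-selected interval. -/
def efGreedyAux : ℕ → Finset Iv → Finset Iv
  | 0, _ => ∅
  | fuel + 1, S =>
    if h : S.Nonempty then
      let r := efPick S h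
      insert r (efGreedyAux fuel (S.filter fun i => i ≠ r ∧ ¬ Overlap i r))
    else ∅

/-- The earliest-finish greedy optimal solution `I*` of a prediction set. -/
def efGreedy (S : Finset Iv) : Finset Iv := efGreedyAux S.card S

/-- One step of TrustGreedy: the state is the pair `(A, Acc)` of the current plan and
the set of accepted intervals, and `r` is the arriving request. -/
noncomputable def tgStep (Ihat : Finset Iv) (st : Finset Iv × Finset Iv) (r : Iv) :
    Finset Iv × Finset Iv :=
  if r ∈ st.1 then (st.1, insert r st.2)
  else if r ∉ Ihat ∧ (∀ i ∈ st.2, ¬ Overlap i r) ∧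
      (st.1.filter fun i => Overlap i r).card ≤ 1 ∧
      (∀ i ∈ st.1.filter fun i => Overlap i r, r.2 ≤ i.2) then
    ((st.1 \ st.1.filter fun i => Overlap i r) ∪ {r}, insert r st.2)
  else st

/-- The number of requests accepted by TrustGreedy on the request sequence `I` with
prediction `Ihat`: the plan starts as the earliest-finish greedy optimal solution of
`Ihat` and the requests are processed in order. -/
noncomputable def TrustGreedy (Ihat : Finset Iv) (I : List Iv) : ℕ :=
  (I.foldl (tgStep Ihat) (efGreedy Ihat, ∅)).2.card

/-!
Fix a maximum non-overlapping set `T` of requests. Each `t ∈ T` is charged either to an accepted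
request, injectively, or to an interval of the symmetric difference `Δ` of `I` and `Ihat`, the
charges of distinct requests being distinct and pairwise non-overlapping; hence
`|T| ≤ |Acc| + Opt Δ`. Say that `w` dominates `t` if `w` overlaps `t` and ends no later: an interval
dominates only pairwise overlapping intervals, so charging a request to an interval dominating it
is injective on `T`. Suitable dominating intervals exist by an invariant of TrustGreedy: an
interval of `I*` that leaves the plan is dominated by the accepted unpredicted request displacing
it, and a rejected request is dominated by an interval of the plan or of `I*`, unless it is
unpredicted and overlaps an accepted request.
-/

def Dominates (w t : Iv) : Prop := Overlap w t ∧ w.2 ≤ t.2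

lemma overlap_iff {a b : Iv} :
    Overlap a b ↔ a.1 < a.2 ∧ b.1 < a.2 ∧ a.1 < b.2 ∧ b.1 < b.2 := by
  simp only [Overlap, max_lt_iff, lt_min_iff, and_assoc]

lemma Overlap.symm {a b : Iv} (h : Overlap a b) : Overlap b a := by
  rwa [Overlap, max_comm, min_comm]

lemma overlap_self {a : Iv} (h : a.1 < a.2) : Overlap a a := by
  simpa [Overlap] using h

lemma Overlap.left_self {a b : Iv} (h : Overlap a b) : Overlap a a :=
  overlap_self (overlap_iff.1 h).1

lemma Dominates.overlap {w t t' : Iv} (h : Dominates w t) (h' : Dominates w t') :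
    Overlap t t' := by
  obtain ⟨h₁, h₂⟩ := h
  obtain ⟨h₁', h₂'⟩ := h'
  rw [overlap_iff] at *
  omega

lemma dominates_or_dominates_of_overlap {a b x : Iv} (hab : ¬ Overlap a b)
    (ha : Overlap a x) (hb : Overlap b x) : Dominates a x ∨ Dominates b x := by
  rw [overlap_iff] at hab ha hb
  unfold Dominates
  rw [overlap_iff, overlap_iff]
  omega

/-- `t'` lies to the right of `t`, so `w` reaches from inside `t` beyond its right end. -/
lemma Dominates.overlap_of_lt {c t t' w x : Iv} (hct : Dominates c t) (hcw : Dominates c w)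
    (hwt' : Dominates w t') (htt' : ¬ Overlap t t') (hxt : Overlap x t) (hlt : t.2 < x.2) :
    Overlap w x := by
  obtain ⟨hct, hct'⟩ := hct
  obtain ⟨hcw, hcw'⟩ := hcw
  obtain ⟨hwt', hwt''⟩ := hwt'
  rw [overlap_iff] at *
  omega

lemma NonOverlapping.eq {S : Finset Iv} (hS : NonOverlapping S) {a b : Iv} (ha : a ∈ S)
    (hb : b ∈ S) (h : a = b ∨ Overlap a b) : a = b :=
  h.elim id fun hov => by_contra fun hne => hS a ha b hb hne hov

lemma NonOverlapping.sdiff_filter_union {A : Finset Iv} (hA : NonOverlapping A) (r : Iv) :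
    NonOverlapping ((A \ A.filter (Overlap · r)) ∪ {r}) := by
  have hr : ∀ a ∈ A \ A.filter (Overlap · r), ¬ Overlap a r := fun a ha hov =>
    (Finset.mem_sdiff.1 ha).2 (Finset.mem_filter.2 ⟨(Finset.mem_sdiff.1 ha).1, hov⟩)
  intro i hi j hj hij
  simp only [Finset.mem_union, Finset.mem_singleton] at hi hj
  rcases hi with hi | rfl <;> rcases hj with hj | rfl
  · exact hA i (Finset.mem_sdiff.1 hi).1 j (Finset.mem_sdiff.1 hj).1 hij
  · exact hr i hi
  · exact fun hov => hr j hj hov.symm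
  · exact absurd rfl hij

lemma card_le_opt {S T : Finset Iv} (hTS : T ⊆ S) (hT : NonOverlapping T) :
    T.card ≤ Opt S :=
  Finset.le_sup (Finset.mem_filter.2 ⟨Finset.mem_powerset.2 hTS, hT⟩)

lemma exists_card_eq_opt (S : Finset Iv) :
    ∃ T ⊆ S, NonOverlapping T ∧ T.card = Opt S := by
  have hne : (S.powerset.filter NonOverlapping).Nonempty :=
    ⟨∅, Finset.mem_filter.2 ⟨Finset.empty_mem_powerset S, by simp [NonOverlapping]⟩⟩
  obtain ⟨T, hT, hsup⟩ := Finset.exists_mem_eq_sup _ hne Finset.card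
  rw [Finset.mem_filter, Finset.mem_powerset] at hT
  exact ⟨T, hT.1, hT.2, hsup.symm⟩

lemma card_le_card_add_opt_of_charge {T X Y : Finset Iv} (α β : Iv → Iv → Prop)
    (hcharge : ∀ t ∈ T, (∃ s ∈ X, α t s) ∨ ∃ p ∈ Y, β t p)
    (hα : ∀ t ∈ T, ∀ t' ∈ T, ∀ s, α t s → α t' s → t = t')
    (hβ : ∀ t ∈ T, ∀ t' ∈ T, ∀ p p', β t p → β t' p' → (p = p' ∨ Overlap p p') → t = t') :
    T.card ≤ X.card + Opt Y := by
  set T₁ := T.filter fun t => ∃ s ∈ X, α t s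
  set T₂ := T.filter fun t => ¬ ∃ s ∈ X, α t s
  choose! σ hσ using fun t (ht : t ∈ T₁) => (Finset.mem_filter.1 ht).2
  choose! π hπ using fun t (ht : t ∈ T₂) =>
    ((hcharge t (Finset.mem_filter.1 ht).1).resolve_left (Finset.mem_filter.1 ht).2)
  have hT₁ : T₁.card ≤ X.card :=
    Finset.card_le_card_of_injOn σ (fun t ht => (hσ t ht).1) fun t ht t' ht' h =>
      hα t (Finset.mem_filter.1 ht).1 t' (Finset.mem_filter.1 ht').1 _ (hσ t ht).2
        (h ▸ (hσ t' ht').2)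
  have hπ_inj : ∀ t ∈ T₂, ∀ t' ∈ T₂, (π t = π t' ∨ Overlap (π t) (π t')) → t = t' :=
    fun t ht t' ht' h => hβ t (Finset.mem_filter.1 ht).1 t' (Finset.mem_filter.1 ht').1 _ _
      (hπ t ht).2 (hπ t' ht').2 h
  have hT₂ : T₂.card ≤ Opt Y := by
    rw [← Finset.card_image_of_injOn (s := T₂) (f := π)
      fun t ht t' ht' h => hπ_inj t ht t' ht' (Or.inl h)]
    refine card_le_opt (fun p hp => ?_) fun p hp p' hp' hne hov => ?_
    · obtain ⟨t, ht, rfl⟩ := Finset.mem_image.1 hp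
      exact (hπ t ht).1
    · obtain ⟨t, ht, rfl⟩ := Finset.mem_image.1 hp
      obtain ⟨t', ht', rfl⟩ := Finset.mem_image.1 hp'
      exact hne (congrArg π (hπ_inj t ht t' ht' (Or.inr hov)))
  have hsplit : T₁.card + T₂.card = T.card := Finset.card_filter_add_card_filter_not _
  omega

lemma efPick_mem (S : Finset Iv) (h : S.Nonempty) : efPick S h ∈ S := by
  obtain ⟨i, hi, him⟩ := Finset.mem_image.1
    (Finset.min'_mem _ (h.image fun i : Iv => toLex (i.2, i.1)))
  simpa [efPick, ← him] using hi

lemma efPick_snd_le (S : Finset Iv) (h : S.Nonempty) {y : Iv} (hy : y ∈ S) :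
    (efPick S h).2 ≤ y.2 :=
  Prod.Lex.monotone_fst_ofLex
    (Finset.min'_le _ _ (Finset.mem_image_of_mem (fun i : Iv => toLex (i.2, i.1)) hy))

lemma efGreedyAux_subset (fuel : ℕ) (S : Finset Iv) : efGreedyAux fuel S ⊆ S := by
  induction fuel generalizing S with
  | zero => simp [efGreedyAux]
  | succ n ih =>
    rw [efGreedyAux]
    split_ifs with h
    · exact Finset.insert_subset (efPick_mem S h) ((ih _).trans (Finset.filter_subset _ _))
    · exact Finset.empty_subset S

lemma efGreedyAux_nonOverlapping (fuel : ℕ) (S : Finset Iv) :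
    NonOverlapping (efGreedyAux fuel S) := by
  induction fuel generalizing S with
  | zero => simp [efGreedyAux, NonOverlapping]
  | succ n ih =>
    rw [efGreedyAux]
    split_ifs with h
    · set r := efPick S h
      have hrest : ∀ i ∈ efGreedyAux n (S.filter fun i => i ≠ r ∧ ¬ Overlap i r), ¬ Overlap i r :=
        fun i hi => (Finset.mem_filter.1 (efGreedyAux_subset _ _ hi)).2.2
      intro i hi j hj hij
      rcases Finset.mem_insert.1 hi with rfl | hi <;> rcases Finset.mem_insert.1 hj with rfl | hj
      · exact absurd rfl hij
      · exact fun hov => hrest j hj hov.symm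
      · exact hrest i hi
      · exact ih _ i hi j hj hij
    · simp [NonOverlapping]

lemma exists_dominates_mem_efGreedyAux (fuel : ℕ) (S : Finset Iv) (hS : S.card ≤ fuel)
    {y : Iv} (hy : y ∈ S) (hyv : y.1 < y.2) : ∃ d ∈ efGreedyAux fuel S, Dominates d y := by
  induction fuel generalizing S with
  | zero => simp_all
  | succ n ih =>
    have hne : S.Nonempty := ⟨y, hy⟩
    rw [efGreedyAux, dif_pos hne]
    set r := efPick S hne
    by_cases hyS : y ∈ S.filter fun i => i ≠ r ∧ ¬ Overlap i r
    · have hlt : (S.filter fun i => i ≠ r ∧ ¬ Overlap i r).card < S.card :=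
        Finset.card_lt_card (Finset.filter_ssubset.2 ⟨r, efPick_mem S hne, by simp⟩)
      obtain ⟨d, hd, hdy⟩ := ih _ (by omega) hyS
      exact ⟨d, Finset.mem_insert_of_mem hd, hdy⟩
    · refine ⟨r, Finset.mem_insert_self _ _, ?_, efPick_snd_le S hne hy⟩
      simp only [Finset.mem_filter, hy, true_and, not_and_or, not_not] at hyS
      rcases hyS with rfl | hov
      · exact overlap_self hyv
      · exact hov.symm

lemma efGreedy_subset (S : Finset Iv) : efGreedy S ⊆ S := efGreedyAux_subset _ _

lemma efGreedy_nonOverlapping (S : Finset Iv) : NonOverlapping (efGreedy S) :=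
  efGreedyAux_nonOverlapping _ _

lemma exists_dominates_mem_efGreedy {S : Finset Iv} {y : Iv} (hy : y ∈ S) (hyv : y.1 < y.2) :
    ∃ d ∈ efGreedy S, Dominates d y :=
  exists_dominates_mem_efGreedyAux _ _ le_rfl hy hyv

/-- The invariant of TrustGreedy once the requests in `P` have arrived, `A` being the plan and
`Acc` the set of accepted requests. -/
structure TrustGreedyInv (Ihat P A Acc : Finset Iv) : Prop where
  acc_subset_plan : Acc ⊆ A
  acc_subset_arrived : Acc ⊆ P
  plan_nonOverlapping : NonOverlapping A
  plan_subset : A ⊆ efGreedy Ihat ∪ Acc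
  plan_unarrived : ∀ a ∈ A \ Acc, a ∉ P
  displaced : ∀ w ∈ efGreedy Ihat \ A, ∃ c ∈ Acc, c ∉ Ihat ∧ Dominates c w
  rejected : ∀ t ∈ P \ Acc,
    (∃ w ∈ A ∪ efGreedy Ihat, Dominates w t) ∨ (t ∉ Ihat ∧ ∃ c ∈ Acc, Overlap c t)

namespace TrustGreedyInv

variable {Ihat P A Acc : Finset Iv} {r : Iv}

lemma init (Ihat : Finset Iv) : TrustGreedyInv Ihat ∅ (efGreedy Ihat) ∅ where
  acc_subset_plan := Finset.empty_subset _
  acc_subset_arrived := Finset.empty_subset _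
  plan_nonOverlapping := efGreedy_nonOverlapping Ihat
  plan_subset := Finset.subset_union_left
  plan_unarrived _ _ := Finset.notMem_empty _
  displaced _ hw := absurd (Finset.mem_sdiff.1 hw).1 (Finset.mem_sdiff.1 hw).2
  rejected _ ht := absurd (Finset.mem_sdiff.1 ht).1 (Finset.notMem_empty _)

lemma mem_efGreedy (inv : TrustGreedyInv Ihat P A Acc) {a : Iv} (ha : a ∈ A \ Acc) :
    a ∈ efGreedy Ihat :=
  (Finset.mem_union.1 (inv.plan_subset (Finset.mem_sdiff.1 ha).1)).resolve_right
    (Finset.mem_sdiff.1 ha).2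

lemma rejected_mono (inv : TrustGreedyInv Ihat P A Acc) {A' Acc' : Finset Iv}
    (hA : A ⊆ A' ∪ efGreedy Ihat) (hAcc : Acc ⊆ Acc') {t : Iv} (ht : t ∈ P) (htAcc : t ∉ Acc') :
    (∃ w ∈ A' ∪ efGreedy Ihat, Dominates w t) ∨ (t ∉ Ihat ∧ ∃ c ∈ Acc', Overlap c t) := by
  rcases inv.rejected t (Finset.mem_sdiff.2 ⟨ht, fun h => htAcc (hAcc h)⟩) with
    ⟨w, hw, hwt⟩ | ⟨htI, c, hc, hct⟩
  · refine Or.inl ⟨w, ?_, hwt⟩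
    rcases Finset.mem_union.1 hw with hw | hw
    · exact hA hw
    · exact Finset.mem_union_right _ hw
  · exact Or.inr ⟨htI, c, hAcc hc, hct⟩

lemma accept (inv : TrustGreedyInv Ihat P A Acc) (hr : r ∈ A) :
    TrustGreedyInv Ihat (insert r P) A (insert r Acc) where
  acc_subset_plan := Finset.insert_subset hr inv.acc_subset_plan
  acc_subset_arrived := Finset.insert_subset_insert r inv.acc_subset_arrived
  plan_nonOverlapping := inv.plan_nonOverlapping
  plan_subset := inv.plan_subset.trans
    (Finset.union_subset_union_right (Finset.subset_insert _ _))
  plan_unarrived a ha := by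
    simp only [Finset.mem_sdiff, Finset.mem_insert, not_or] at ha ⊢
    exact ⟨ha.2.1, inv.plan_unarrived a (Finset.mem_sdiff.2 ⟨ha.1, ha.2.2⟩)⟩
  displaced w hw := by
    obtain ⟨c, hc, hcI, hcw⟩ := inv.displaced w hw
    exact ⟨c, Finset.mem_insert_of_mem hc, hcI, hcw⟩
  rejected t ht := by
    simp only [Finset.mem_sdiff, Finset.mem_insert, not_or] at ht
    obtain ⟨ht | ht, htr, htAcc⟩ := ht
    · exact absurd ht htr
    · exact inv.rejected_mono Finset.subset_union_left (Finset.subset_insert r Acc) ht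
        (by simp [htr, htAcc])

lemma swap (inv : TrustGreedyInv Ihat P A Acc) (hrA : r ∉ A) (hrI : r ∉ Ihat)
    (hfree : ∀ i ∈ Acc, ¬ Overlap i r) (hle : ∀ i ∈ A.filter (Overlap · r), r.2 ≤ i.2) :
    TrustGreedyInv Ihat (insert r P) ((A \ A.filter (Overlap · r)) ∪ {r}) (insert r Acc) := by
  set B := A.filter (Overlap · r)
  have hBAcc : ∀ c ∈ Acc, c ∉ B := fun c hc hcB => hfree c hc (Finset.mem_filter.1 hcB).2
  have hBI : ∀ b ∈ B, b ∈ efGreedy Ihat := fun b hb =>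
    inv.mem_efGreedy (Finset.mem_sdiff.2 ⟨(Finset.mem_filter.1 hb).1, fun h => hBAcc b h hb⟩)
  have hA : A ⊆ ((A \ B) ∪ {r}) ∪ efGreedy Ihat := fun a ha => by
    by_cases haB : a ∈ B
    · exact Finset.mem_union_right _ (hBI a haB)
    · exact Finset.mem_union_left _ (Finset.mem_union_left _ (Finset.mem_sdiff.2 ⟨ha, haB⟩))
  refine
    { acc_subset_plan := ?_
      acc_subset_arrived := Finset.insert_subset_insert r inv.acc_subset_arrived
      plan_nonOverlapping := inv.plan_nonOverlapping.sdiff_filter_union r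
      plan_subset := ?_
      plan_unarrived := ?_
      displaced := ?_
      rejected := ?_ }
  · refine Finset.insert_subset (by simp) fun c hc => ?_
    exact Finset.mem_union_left _ (Finset.mem_sdiff.2 ⟨inv.acc_subset_plan hc, hBAcc c hc⟩)
  · refine Finset.union_subset ?_ (by simp)
    exact (Finset.sdiff_subset.trans inv.plan_subset).trans
      (Finset.union_subset_union_right (Finset.subset_insert _ _))
  · intro a ha
    simp only [Finset.mem_sdiff, Finset.mem_union, Finset.mem_singleton, Finset.mem_insert,
      not_or] at ha ⊢
    obtain ⟨⟨haA, -⟩ | rfl, har, haAcc⟩ := ha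
    · exact ⟨har, inv.plan_unarrived a (Finset.mem_sdiff.2 ⟨haA, haAcc⟩)⟩
    · exact absurd rfl har
  · intro w hw
    obtain ⟨hwI, hwA'⟩ := Finset.mem_sdiff.1 hw
    by_cases hwB : w ∈ B
    · exact ⟨r, Finset.mem_insert_self r Acc, hrI, (Finset.mem_filter.1 hwB).2.symm, hle w hwB⟩
    · have hwA : w ∉ A := fun hwA =>
        hwA' (Finset.mem_union_left _ (Finset.mem_sdiff.2 ⟨hwA, hwB⟩))
      obtain ⟨c, hc, hcI, hcw⟩ := inv.displaced w (Finset.mem_sdiff.2 ⟨hwI, hwA⟩)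
      exact ⟨c, Finset.mem_insert_of_mem hc, hcI, hcw⟩
  · intro t ht
    simp only [Finset.mem_sdiff, Finset.mem_insert, not_or] at ht
    obtain ⟨ht | ht, htr, htAcc⟩ := ht
    · exact absurd ht htr
    · exact inv.rejected_mono hA (Finset.subset_insert r Acc) ht (by simp [htr, htAcc])

lemma dominates_or_overlap_of_not_swap (inv : TrustGreedyInv Ihat P A Acc) (hrv : r.1 < r.2)
    (hrej : ¬ (r ∉ Ihat ∧ (∀ i ∈ Acc, ¬ Overlap i r) ∧ (A.filter (Overlap · r)).card ≤ 1 ∧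
      ∀ i ∈ A.filter (Overlap · r), r.2 ≤ i.2)) :
    (∃ w ∈ A ∪ efGreedy Ihat, Dominates w r) ∨ (r ∉ Ihat ∧ ∃ c ∈ Acc, Overlap c r) := by
  by_cases hrI : r ∈ Ihat
  · obtain ⟨d, hd, hdr⟩ := exists_dominates_mem_efGreedy hrI hrv
    exact Or.inl ⟨d, Finset.mem_union_right _ hd, hdr⟩
  by_cases hAcc : ∃ c ∈ Acc, Overlap c r
  · exact Or.inr ⟨hrI, hAcc⟩
  refine Or.inl ?_
  obtain hcard | ⟨i, hi, hlt⟩ :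
      1 < (A.filter (Overlap · r)).card ∨ ∃ i ∈ A.filter (Overlap · r), i.2 < r.2 := by
    by_contra! h
    exact hrej ⟨hrI, fun c hc hcr => hAcc ⟨c, hc, hcr⟩, h.1, h.2⟩
  · obtain ⟨a, ha, b, hb, hab⟩ := Finset.one_lt_card.1 hcard
    have haA := (Finset.mem_filter.1 ha).1
    have hbA := (Finset.mem_filter.1 hb).1
    rcases dominates_or_dominates_of_overlap (inv.plan_nonOverlapping a haA b hbA hab)
      (Finset.mem_filter.1 ha).2 (Finset.mem_filter.1 hb).2 with h | h
    · exact ⟨a, Finset.mem_union_left _ haA, h⟩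
    · exact ⟨b, Finset.mem_union_left _ hbA, h⟩
  · exact ⟨i, Finset.mem_union_left _ (Finset.mem_filter.1 hi).1, (Finset.mem_filter.1 hi).2,
      hlt.le⟩

lemma reject (inv : TrustGreedyInv Ihat P A Acc) (hrv : r.1 < r.2) (hrA : r ∉ A)
    (hrej : ¬ (r ∉ Ihat ∧ (∀ i ∈ Acc, ¬ Overlap i r) ∧ (A.filter (Overlap · r)).card ≤ 1 ∧
      ∀ i ∈ A.filter (Overlap · r), r.2 ≤ i.2)) :
    TrustGreedyInv Ihat (insert r P) A Acc where
  acc_subset_plan := inv.acc_subset_plan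
  acc_subset_arrived := inv.acc_subset_arrived.trans (Finset.subset_insert r P)
  plan_nonOverlapping := inv.plan_nonOverlapping
  plan_subset := inv.plan_subset
  plan_unarrived a ha := by
    rw [Finset.mem_insert, not_or]
    exact ⟨fun h => hrA (h ▸ (Finset.mem_sdiff.1 ha).1), inv.plan_unarrived a ha⟩
  displaced := inv.displaced
  rejected t ht := by
    obtain ⟨ht, htAcc⟩ := Finset.mem_sdiff.1 ht
    rcases Finset.mem_insert.1 ht with rfl | ht
    · exact inv.dominates_or_overlap_of_not_swap hrv hrej
    · exact inv.rejected t (Finset.mem_sdiff.2 ⟨ht, htAcc⟩)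

lemma tgStep (inv : TrustGreedyInv Ihat P A Acc) (hrv : r.1 < r.2) :
    TrustGreedyInv Ihat (insert r P) (tgStep Ihat (A, Acc) r).1 (tgStep Ihat (A, Acc) r).2 := by
  unfold _root_.tgStep
  split_ifs with hrA hswap
  · exact inv.accept hrA
  · exact inv.swap hrA hswap.1 hswap.2.1 hswap.2.2.2
  · exact inv.reject hrv hrA hswap

lemma foldl (L : List Iv) (hLv : ∀ l ∈ L, l.1 < l.2)
    {st : Finset Iv × Finset Iv} (inv : TrustGreedyInv Ihat P st.1 st.2) :
    TrustGreedyInv Ihat (P ∪ L.toFinset) (L.foldl (_root_.tgStep Ihat) st).1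
      (L.foldl (_root_.tgStep Ihat) st).2 := by
  induction L generalizing P st with
  | nil => simpa using inv
  | cons r L ih =>
    have h := ih (fun l hl => hLv l (List.mem_cons_of_mem r hl))
      (inv.tgStep (hLv r List.mem_cons_self))
    rwa [Finset.insert_union, ← Finset.union_insert, ← List.toFinset_cons] at h

end TrustGreedyInv

lemma trustGreedyInv_run (Ihat : Finset Iv) {I : List Iv} (hIv : ∀ i ∈ I, i.1 < i.2) :
    TrustGreedyInv Ihat I.toFinset (I.foldl (tgStep Ihat) (efGreedy Ihat, ∅)).1
      (I.foldl (tgStep Ihat) (efGreedy Ihat, ∅)).2 := by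
  simpa using (TrustGreedyInv.init Ihat).foldl I hIv (st := (efGreedy Ihat, ∅))

/-- A request `t` of a non-overlapping set `T` is charged to an accepted interval `s`
(`AccCharge … t s`) or to an interval `p` of the symmetric difference of `I` and `Ihat`
(`ErrCharge … t p`). -/
inductive AccCharge (Ihat A Acc T : Finset Iv) : Iv → Iv → Prop
  | self {t : Iv} : AccCharge Ihat A Acc T t t
  | dominated {t s : Iv} : Dominates s t →
      (s ∈ Ihat ∨ ∃ x ∈ A \ Acc, Overlap x t ∧ t.2 < x.2) → AccCharge Ihat A Acc T t s
  | displacing {t s w : Iv} : s ∉ T → s ∉ Ihat → w ∈ efGreedy Ihat \ A → Dominates s w →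
      Dominates w t → AccCharge Ihat A Acc T t s

inductive ErrCharge (Ihat A Acc T : Finset Iv) : Iv → Iv → Prop
  | unarrived {t p : Iv} : p ∈ A \ Acc → Dominates p t → ErrCharge Ihat A Acc T t p
  | self {t : Iv} : t ∉ Acc → (∀ x ∈ A \ Acc, ¬ Overlap x t) → ErrCharge Ihat A Acc T t t
  | displacing {t p w : Iv} : p ∈ T → p ∈ Acc → w ∈ efGreedy Ihat \ A → Dominates p w →
      Dominates w t → ErrCharge Ihat A Acc T t p

namespace TrustGreedyInv

variable {Ihat P A Acc T : Finset Iv} {t t' s w : Iv}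

lemma eq_of_accCharge_of_displacing (inv : TrustGreedyInv Ihat P A Acc) (hT : NonOverlapping T)
    (ht : t ∈ T) (ht' : t' ∈ T) (h : AccCharge Ihat A Acc T t s) (hsT : s ∉ T) (hsI : s ∉ Ihat)
    (hw : w ∈ efGreedy Ihat \ A) (hsw : Dominates s w) (hwt' : Dominates w t') : t = t' := by
  have hI := efGreedy_nonOverlapping Ihat
  cases h with
  | self => exact absurd ht hsT
  | dominated hst hcond =>
    obtain hsI' | ⟨x, hx, hxt, hlt⟩ := hcond
    · exact absurd hsI' hsI
    by_contra hne
    have hwx := hst.overlap_of_lt hsw hwt' (fun hov => hne (hT.eq ht ht' (Or.inr hov))) hxt hlt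
    have hwx' : w ≠ x := fun h => (Finset.mem_sdiff.1 hw).2 (h ▸ (Finset.mem_sdiff.1 hx).1)
    exact hI w (Finset.mem_sdiff.1 hw).1 x (inv.mem_efGreedy hx) hwx' hwx
  | displacing _ _ hw₀ hsw₀ hw₀t =>
    obtain rfl :=
      hI.eq (Finset.mem_sdiff.1 hw₀).1 (Finset.mem_sdiff.1 hw).1 (Or.inr (hsw₀.overlap hsw))
    exact hT.eq ht ht' (Or.inr (hw₀t.overlap hwt'))

lemma eq_of_accCharge (inv : TrustGreedyInv Ihat P A Acc) (hT : NonOverlapping T)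
    (ht : t ∈ T) (ht' : t' ∈ T) (h : AccCharge Ihat A Acc T t s)
    (h' : AccCharge Ihat A Acc T t' s) : t = t' := by
  cases h' with
  | displacing hsT hsI hw hsw hwt' =>
    exact inv.eq_of_accCharge_of_displacing hT ht ht' h hsT hsI hw hsw hwt'
  | self =>
    cases h with
    | self => rfl
    | dominated hst _ => exact hT.eq ht ht' (Or.inr hst.1.symm)
    | displacing hsT => exact absurd ht' hsT
  | dominated hst' hcond' =>
    cases h with
    | self => exact hT.eq ht ht' (Or.inr hst'.1)
    | dominated hst _ => exact hT.eq ht ht' (Or.inr (hst.overlap hst'))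
    | displacing hsT hsI hw hsw hwt =>
      exact (inv.eq_of_accCharge_of_displacing hT ht' ht (.dominated hst' hcond') hsT hsI hw hsw
        hwt).symm

lemma eq_of_errCharge (inv : TrustGreedyInv Ihat P A Acc) (hT : NonOverlapping T)
    {p p' : Iv} (ht : t ∈ T) (ht' : t' ∈ T) (h : ErrCharge Ihat A Acc T t p)
    (h' : ErrCharge Ihat A Acc T t' p') (hpp : p = p' ∨ Overlap p p') : t = t' := by
  have hA := inv.plan_nonOverlapping
  have hAccA := inv.acc_subset_plan
  have hI := efGreedy_nonOverlapping Ihat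
  cases h with
  | unarrived hp hpt =>
    cases h' with
    | unarrived hp' hp't =>
      obtain rfl := hA.eq (Finset.mem_sdiff.1 hp).1 (Finset.mem_sdiff.1 hp').1 hpp
      exact hT.eq ht ht' (Or.inr (hpt.overlap hp't))
    | self _ hfree =>
      rcases hpp with rfl | hov
      exacts [absurd hpt.1.left_self (hfree _ hp), absurd hov (hfree _ hp)]
    | displacing _ hp'Acc =>
      obtain rfl := hA.eq (Finset.mem_sdiff.1 hp).1 (hAccA hp'Acc) hpp
      exact absurd hp'Acc (Finset.mem_sdiff.1 hp).2
  | self htAcc hfree =>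
    cases h' with
    | unarrived hp' hp't =>
      rcases hpp with rfl | hov
      exacts [absurd hp't.1.left_self (hfree _ hp'), absurd hov.symm (hfree _ hp')]
    | self => exact hT.eq ht ht' hpp
    | displacing hp'T hp'Acc =>
      obtain rfl := hT.eq ht hp'T hpp
      exact absurd hp'Acc htAcc
  | displacing hpT hpAcc hw hpw hwt =>
    cases h' with
    | unarrived hp' =>
      obtain rfl := hA.eq (hAccA hpAcc) (Finset.mem_sdiff.1 hp').1 hpp
      exact absurd hpAcc (Finset.mem_sdiff.1 hp').2
    | self htAcc' =>
      obtain rfl := hT.eq hpT ht' hpp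
      exact absurd hpAcc htAcc'
    | displacing hp'T _ hw' hp'w' hw't' =>
      obtain rfl := hT.eq hpT hp'T hpp
      obtain rfl := hI.eq (Finset.mem_sdiff.1 hw).1 (Finset.mem_sdiff.1 hw').1
        (Or.inr (hpw.overlap hp'w'))
      exact hT.eq ht ht' (Or.inr (hwt.overlap hw't'))

lemma exists_dominates_of_uncharged (inv : TrustGreedyInv Ihat P A Acc) (ht : t ∈ P)
    (htv : t.1 < t.2) (htAcc : t ∉ Acc) (hU : ∀ x ∈ A \ Acc, ¬ Dominates x t)
    (hblocked : t ∈ Ihat ∨ ∃ x ∈ A \ Acc, Overlap x t) :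
    (∃ s ∈ Acc, Dominates s t ∧ (s ∈ Ihat ∨ ∃ x ∈ A \ Acc, Overlap x t ∧ t.2 < x.2)) ∨
      ∃ w ∈ efGreedy Ihat \ A, Dominates w t := by
  have hAcc_of_mem : ∀ a ∈ A, Dominates a t → a ∈ Acc := fun a ha hat =>
    by_contra fun h => hU a (Finset.mem_sdiff.2 ⟨ha, h⟩) hat
  by_cases htI : t ∈ Ihat
  · obtain ⟨d, hd, hdt⟩ := exists_dominates_mem_efGreedy htI htv
    by_cases hdA : d ∈ A
    · exact Or.inl ⟨d, hAcc_of_mem d hdA hdt, hdt, Or.inl (efGreedy_subset Ihat hd)⟩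
    · exact Or.inr ⟨d, Finset.mem_sdiff.2 ⟨hd, hdA⟩, hdt⟩
  obtain ⟨x, hx, hxt⟩ := hblocked.resolve_left htI
  have hpast : ∃ x ∈ A \ Acc, Overlap x t ∧ t.2 < x.2 :=
    ⟨x, hx, hxt, lt_of_not_ge fun h => hU x hx ⟨hxt, h⟩⟩
  rcases inv.rejected t (Finset.mem_sdiff.2 ⟨ht, htAcc⟩) with ⟨w, hw, hwt⟩ | ⟨-, c, hc, hct⟩
  · by_cases hwA : w ∈ A
    · exact Or.inl ⟨w, hAcc_of_mem w hwA hwt, hwt, Or.inr hpast⟩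
    · exact Or.inr ⟨w, Finset.mem_sdiff.2 ⟨(Finset.mem_union.1 hw).resolve_left hwA, hwA⟩, hwt⟩
  · have hcx : ¬ Overlap c x := inv.plan_nonOverlapping c (inv.acc_subset_plan hc) x
      (Finset.mem_sdiff.1 hx).1 fun h => (Finset.mem_sdiff.1 hx).2 (h ▸ hc)
    rcases dominates_or_dominates_of_overlap hcx hct hxt with hct' | hxt'
    · exact Or.inl ⟨c, hc, hct', Or.inr hpast⟩
    · exact absurd hxt' (hU x hx)

lemma exists_charge (inv : TrustGreedyInv Ihat P A Acc) (hTP : T ⊆ P) (hPv : ∀ t ∈ P, t.1 < t.2)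
    (ht : t ∈ T) :
    (∃ s ∈ Acc, AccCharge Ihat A Acc T t s) ∨
      ∃ p ∈ (P \ Ihat) ∪ (Ihat \ P), ErrCharge Ihat A Acc T t p := by
  have htP := hTP ht
  by_cases htAcc : t ∈ Acc
  · exact Or.inl ⟨t, htAcc, .self⟩
  by_cases hU : ∃ x ∈ A \ Acc, Dominates x t
  · obtain ⟨x, hx, hxt⟩ := hU
    refine Or.inr ⟨x, Finset.mem_union_right _ (Finset.mem_sdiff.2 ⟨?_, inv.plan_unarrived x hx⟩),
      .unarrived hx hxt⟩
    exact efGreedy_subset Ihat (inv.mem_efGreedy hx)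
  push Not at hU
  by_cases hfree : t ∉ Ihat ∧ ∀ x ∈ A \ Acc, ¬ Overlap x t
  · exact Or.inr ⟨t, Finset.mem_union_left _ (Finset.mem_sdiff.2 ⟨htP, hfree.1⟩),
      .self htAcc hfree.2⟩
  have hblocked : t ∈ Ihat ∨ ∃ x ∈ A \ Acc, Overlap x t := by
    by_contra! h
    exact hfree h
  rcases inv.exists_dominates_of_uncharged htP (hPv t htP) htAcc hU hblocked with
    ⟨s, hs, hst, hcond⟩ | ⟨w, hw, hwt⟩
  · exact Or.inl ⟨s, hs, .dominated hst hcond⟩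
  obtain ⟨c, hc, hcI, hcw⟩ := inv.displaced w hw
  by_cases hcT : c ∈ T
  · exact Or.inr ⟨c, Finset.mem_union_left _ (Finset.mem_sdiff.2 ⟨inv.acc_subset_arrived hc, hcI⟩),
      .displacing hcT hc hw hcw hwt⟩
  · exact Or.inl ⟨c, hc, .displacing hcT hcI hw hcw hwt⟩

lemma card_le_card_add_opt (inv : TrustGreedyInv Ihat P A Acc) (hPv : ∀ t ∈ P, t.1 < t.2)
    (hTP : T ⊆ P) (hT : NonOverlapping T) :
    T.card ≤ Acc.card + Opt ((P \ Ihat) ∪ (Ihat \ P)) :=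
  card_le_card_add_opt_of_charge _ _ (fun _ ht => inv.exists_charge hTP hPv ht)
    (fun _ ht _ ht' _ h h' => inv.eq_of_accCharge hT ht ht' h h')
    (fun _ ht _ ht' _ _ h h' hpp => inv.eq_of_errCharge hT ht ht' h h' hpp)

end TrustGreedyInv

theorem trustGreedy_competitive_general
    (Ihat : Finset Iv) (I : List Iv)
    (hI : ∀ i ∈ I, i.1 < i.2) :
    Opt I.toFinset - Opt ((I.toFinset \ Ihat) ∪ (Ihat \ I.toFinset)) ≤
      TrustGreedy Ihat I := by
  obtain ⟨T, hTI, hT, hcard⟩ := exists_card_eq_opt I.toFinset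
  have h := (trustGreedyInv_run Ihat hI).card_le_card_add_opt
    (fun t ht => hI t (List.mem_toFinset.1 ht)) hTI hT
  unfold TrustGreedy
  omega

/-- TrustGreedy is `(1 − γ)`-competitive: for every prediction
`Ihat` and every sequence `I` of distinct intervals,
`TrustGreedy(Ihat, I) ≥ Opt I − Opt ((I \ Ihat) ∪ (Ihat \ I))`. -/
theorem trustGreedy_competitive
    (Ihat : Finset Iv) (I : List Iv) (hnd : I.Nodup)
    (hI : ∀ i ∈ I, i.1 < i.2) (hIhat : ∀ i ∈ Ihat, i.1 < i.2) :
    Opt I.toFinset - Opt ((I.toFinset \ Ihat) ∪ (Ihat \ I.toFinset)) ≤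
      TrustGreedy Ihat I :=
  trustGreedy_competitive_general Ihat I hI
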